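/- For every r ≥ 1 and n ∈ ℕ, one has H^{(r)}_{n,q}(1|λ) − λ · H^{(r)}_{n,q}(λ) = (1 − λ) · H^{(r−1)}_{n,q}(λ), where H^{(r)}_{n,q}(1|λ) denotes the evaluation of H^{(r)}_{n,q}(x|λ) at x = 1 (for r = 1 note H^{(0)}_{n,q}(λ) = δ_{0,n}). -/

import Mathlib

open Finset Polynomial

/-- The `q`-integer `[n]_q = (1 - q^n)/(1 - q)` viewed in `ℂ`. -/
noncomputable def qInt (q : ℝ) (n : ℕ) : ℂ := (1 - (q : ℂ) ^ n) / (1 - (q : ℂ))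

/-- The `q`-factorial `[n]_q! = ∏_{j=1}^n [j]_q`. -/
noncomputable def qFact (q : ℝ) (n : ℕ) : ℂ := ∏ j ∈ Finset.range n, qInt q (j + 1)

/-- The `q`-binomial coefficient `[n]_q!/([k]_q! [n-k]_q!)`. -/
noncomputable def qBinom (q : ℝ) (n k : ℕ) : ℂ := qFact q n / (qFact q k * qFact q (n - k))

/-- The formal `q`-exponential `e_q(t) = ∑ t^n/[n]_q!` in `ℂ[x][[t]]`. -/
noncomputable def qExp (q : ℝ) : PowerSeries (Polynomial ℂ) :=
  PowerSeries.mk fun n => Polynomial.C (1 / qFact q n)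

/-- The formal series `e_q(xt) = ∑ x^n t^n/[n]_q!` in `ℂ[x][[t]]`. -/
noncomputable def qExpX (q : ℝ) : PowerSeries (Polynomial ℂ) :=
  PowerSeries.mk fun n => Polynomial.C (1 / qFact q n) * Polynomial.X ^ n

/-- `H : ℕ → ℂ[x]` is the family of order-`r` `q`-Frobenius-Euler polynomials
`H^{(r)}_{n,q}(x|λ)`:
`(∑ H_n t^n/[n]_q!) ⬝ (e_q(t) - λ)^r = (1 - λ)^r e_q(xt)` in `ℂ[x][[t]]`. -/
def IsqFrobeniusEulerOrder (q : ℝ) (lam : ℂ) (r : ℕ) (H : ℕ → Polynomial ℂ) : Prop :=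
  (PowerSeries.mk fun n => Polynomial.C (1 / qFact q n) * H n) *
      (qExp q - PowerSeries.C (R := Polynomial ℂ) (Polynomial.C lam)) ^ r =
    PowerSeries.C (R := Polynomial ℂ) (Polynomial.C ((1 - lam) ^ r)) * qExpX q

/-!
Specialising `x` to `1` and to `0` in the generating-function identity turns it into identities
of scalar series: with `P = e_q(t) - λ`, the series of `H^{(r)}_{n,q}(1|λ)` times `P^r` is
`(1-λ)^r e_q(t)`, and those of `H^{(r)}_{n,q}(λ)` and `H^{(r-1)}_{n,q}(λ)` times `P^r`, `P^{r-1}`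
are the constants `(1-λ)^r`, `(1-λ)^{r-1}`. Hence both sides of the claim, as series, become
`(1-λ)^r P` after multiplication by `P^r`, and `P^r` cancels in the domain `ℂ⟦t⟧` because the
`t`-coefficient `1/[1]_q!` of `P` is nonzero.
-/

lemma qInt_ne_zero {q : ℝ} (hq0 : 0 < q) (hq1 : q < 1) {n : ℕ} (hn : n ≠ 0) : qInt q n ≠ 0 := by
  have hqn : (q : ℂ) ^ n ≠ 1 := by exact_mod_cast (pow_lt_one₀ hq0.le hq1 hn).ne
  have hq : (q : ℂ) ≠ 1 := by exact_mod_cast hq1.ne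
  exact div_ne_zero (sub_ne_zero.mpr hqn.symm) (sub_ne_zero.mpr hq.symm)

lemma qFact_ne_zero {q : ℝ} (hq0 : 0 < q) (hq1 : q < 1) (n : ℕ) : qFact q n ≠ 0 :=
  prod_ne_zero_iff.mpr fun j _ => qInt_ne_zero hq0 hq1 j.succ_ne_zero

noncomputable def qEGF (q : ℝ) (f : ℕ → ℂ) : PowerSeries ℂ :=
  PowerSeries.mk fun n => f n / qFact q n

@[simp]
lemma coeff_qEGF (q : ℝ) (f : ℕ → ℂ) (n : ℕ) : PowerSeries.coeff n (qEGF q f) = f n / qFact q n :=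
  PowerSeries.coeff_mk _ _

lemma qEGF_zero_pow (q : ℝ) : qEGF q (fun n => 0 ^ n) = 1 := by
  ext (_ | n) <;> simp [qFact, PowerSeries.coeff_one]

lemma map_evalRingHom_mk_C_mul (q : ℝ) (a : ℂ) (H : ℕ → Polynomial ℂ) :
    PowerSeries.map (evalRingHom a) (PowerSeries.mk fun n => C (1 / qFact q n) * H n) =
      qEGF q fun n => (H n).eval a := by
  ext n
  simp [PowerSeries.coeff_map, div_eq_inv_mul]

lemma map_evalRingHom_qExp (q : ℝ) (a : ℂ) :
    PowerSeries.map (evalRingHom a) (qExp q) = qEGF q 1 := by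
  ext n
  simp [qExp, PowerSeries.coeff_map]

lemma map_evalRingHom_qExpX (q : ℝ) (a : ℂ) :
    PowerSeries.map (evalRingHom a) (qExpX q) = qEGF q fun n => a ^ n := by
  ext n
  simp [qExpX, PowerSeries.coeff_map, div_eq_inv_mul]

lemma IsqFrobeniusEulerOrder.qEGF_eval_mul {q : ℝ} {lam : ℂ} {r : ℕ} {H : ℕ → Polynomial ℂ}
    (hH : IsqFrobeniusEulerOrder q lam r H) (a : ℂ) :
    qEGF q (fun n => (H n).eval a) * (qEGF q 1 - PowerSeries.C lam) ^ r =
      PowerSeries.C (1 - lam) ^ r * qEGF q fun n => a ^ n := by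
  have h := congrArg (PowerSeries.map (evalRingHom a)) hH
  rw [map_mul, map_mul, map_pow, map_sub, map_evalRingHom_mk_C_mul, map_evalRingHom_qExp,
    map_evalRingHom_qExpX] at h
  simpa using h

lemma qEGF_one_sub_C_ne_zero {q : ℝ} (hq0 : 0 < q) (hq1 : q < 1) (lam : ℂ) :
    qEGF q 1 - PowerSeries.C lam ≠ 0 := fun h => by
  simpa [qFact_ne_zero hq0 hq1] using congrArg (PowerSeries.coeff 1) h

lemma sub_mul_eq_mul_of_mul_pow_eq {R : Type*} [CommRing R] [IsDomain R]
    {A B G E l c : R} {r : ℕ} (hr : 1 ≤ r) (hP : E - l ≠ 0)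
    (hA : A * (E - l) ^ r = c ^ r * E) (hB : B * (E - l) ^ r = c ^ r)
    (hG : G * (E - l) ^ (r - 1) = c ^ (r - 1)) :
    A - l * B = c * G := by
  obtain ⟨k, rfl⟩ := Nat.exists_eq_add_of_le' hr
  refine mul_right_cancel₀ (pow_ne_zero (k + 1) hP) ?_
  rw [Nat.add_sub_cancel] at hG
  linear_combination hA - l * hB - c * (E - l) * hG

theorem qFrobeniusEulerOrder_eval_one_sub_lam_mul_general
    (q : ℝ) (hq0 : 0 < q) (hq1 : q < 1) (lam : ℂ)
    (r : ℕ) (hr : 1 ≤ r)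
    (Hr : ℕ → Polynomial ℂ) (hHr : IsqFrobeniusEulerOrder q lam r Hr)
    (Hrm : ℕ → Polynomial ℂ) (hHrm : IsqFrobeniusEulerOrder q lam (r - 1) Hrm) (n : ℕ) :
    (Hr n).eval 1 - lam * (Hr n).eval 0 = (1 - lam) * (Hrm n).eval 0 := by
  have hA := hHr.qEGF_eval_mul 1
  have hB := hHr.qEGF_eval_mul 0
  have hG := hHrm.qEGF_eval_mul 0
  simp only [one_pow, qEGF_zero_pow, mul_one] at hA hB hG
  have key := sub_mul_eq_mul_of_mul_pow_eq hr (qEGF_one_sub_C_ne_zero hq0 hq1 lam) hA hB hG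
  have hn := congrArg (PowerSeries.coeff n) key
  rw [map_sub, PowerSeries.coeff_C_mul, PowerSeries.coeff_C_mul, coeff_qEGF, coeff_qEGF,
    coeff_qEGF] at hn
  field_simp [qFact_ne_zero hq0 hq1 n] at hn
  linear_combination hn

/-- For `r ≥ 1`, `H^{(r)}_{n,q}(1|λ) - λ H^{(r)}_{n,q}(λ) = (1-λ) H^{(r-1)}_{n,q}(λ)`. -/
theorem qFrobeniusEulerOrder_eval_one_sub_lam_mul
    (q : ℝ) (hq0 : 0 < q) (hq1 : q < 1) (lam : ℂ) (hlam : lam ≠ 1)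
    (r : ℕ) (hr : 1 ≤ r)
    (Hr : ℕ → Polynomial ℂ) (hHr : IsqFrobeniusEulerOrder q lam r Hr)
    (Hrm : ℕ → Polynomial ℂ) (hHrm : IsqFrobeniusEulerOrder q lam (r - 1) Hrm) (n : ℕ) :
    (Hr n).eval 1 - lam * (Hr n).eval 0 = (1 - lam) * (Hrm n).eval 0 :=
  qFrobeniusEulerOrder_eval_one_sub_lam_mul_general q hq0 hq1 lam r hr Hr hHr Hrm hHrm n
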